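/- Let $s > 0$, $p = 1 - e^{-2s}$, $q = 1 - e^{2s}$, and let $h : \mathbb{R}^n \to [0,\infty)$ be measurable with $0 < \int_{\mathbb{R}^n} e^{\frac1p\langle x, z\rangle} h(z)^{1/p}\, dz < \infty$ for every $x \in \mathbb{R}^n$. Then $\| P_s[(h/\gamma)^{1/p}] \|_{L^q(\gamma)}^q = C_s^q\, e^{ns} \int_{\mathbb{R}^n} \big( \int_{\mathbb{R}^n} e^{\frac1p\langle x, z\rangle} h(z)^{1/p}\, dz \big)^q dx$, where $C_s := \big( (2\pi)^{\frac12(\frac1p + \frac1{q'}) - 1} / \sqrt{1 - e^{-2s}} \big)^n$ and $q' = q/(q-1)$. -/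

import Mathlib

open MeasureTheory Real Filter
open scoped ENNReal

noncomputable section

/-- The standard Gaussian density `γ(x) = (2π)^{-n/2} e^{-|x|²/2}`. -/
def stdGauss (n : ℕ) (x : EuclideanSpace ℝ (Fin n)) : ℝ :=
  (2 * Real.pi) ^ (-(n : ℝ) / 2) * Real.exp (-‖x‖ ^ 2 / 2)

/-- The Ornstein–Uhlenbeck semigroup `P_s`, acting on `[0,∞]`-valued functions. -/
def ouSemigroup {n : ℕ} (s : ℝ) (g : EuclideanSpace ℝ (Fin n) → ℝ≥0∞)
    (x : EuclideanSpace ℝ (Fin n)) : ℝ≥0∞ :=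
  ∫⁻ y, ENNReal.ofReal
      (Real.exp (-‖Real.exp (-s) • x - y‖ ^ 2 / (2 * (1 - Real.exp (-2 * s)))) /
        (2 * Real.pi * (1 - Real.exp (-2 * s))) ^ ((n : ℝ) / 2)) * g y

/-- `‖g‖_{L^q(γ)}^q = ∫ g^q dγ` for a `[0,∞]`-valued function `g`. -/
def gaussLqNormPow {n : ℕ} (q : ℝ) (g : EuclideanSpace ℝ (Fin n) → ℝ≥0∞) : ℝ≥0∞ :=
  ∫⁻ x, g x ^ q * ENNReal.ofReal (stdGauss n x)

/-- `F(x) = ∫ e^{⟨x,z⟩/p} h(z)^{1/p} dz`, valued in `[0,∞]`. -/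
def expTransform {n : ℕ} (p : ℝ) (h : EuclideanSpace ℝ (Fin n) → ℝ)
    (x : EuclideanSpace ℝ (Fin n)) : ℝ≥0∞ :=
  ∫⁻ z, ENNReal.ofReal (Real.exp ((1 / p) * (inner ℝ x z : ℝ))) * ENNReal.ofReal (h z) ^ (1 / p)


/-!
Write `a = e^{-s}`, so `p = 1 - a²` and `q = -p/a²`, i.e. `1/p + 1/q = 1`. Dividing the
Ornstein–Uhlenbeck kernel by `γ(y)^{1/p}` cancels the `|y|²` terms, which gives
`P_s[(h/γ)^{1/p}](x) = c e^{-a²|x|²/(2p)} F(ax)` with `c = ouConst n p`. Raising this to the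
power `q` turns the Gaussian factor into `e^{|x|²/2}`, which cancels `γ(x)`; the substitution
`x ↦ ax` then contributes the Jacobian `a^{-n} = e^{ns}`.
-/

open Module

theorem ENNReal.ofReal_mul_rpow {r : ℝ} (hr : 0 < r) (x : ℝ≥0∞) (z : ℝ) :
    (ENNReal.ofReal r * x) ^ z = ENNReal.ofReal (r ^ z) * x ^ z := by
  rw [ENNReal.mul_rpow_eq_ite, ENNReal.ofReal_rpow_of_pos hr]
  simp [hr]

theorem MeasureTheory.Measure.lintegral_comp_smul {E : Type*} [NormedAddCommGroup E]
    [NormedSpace ℝ E] [MeasurableSpace E] [BorelSpace E] [FiniteDimensional ℝ E] (μ : Measure E)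
    [μ.IsAddHaarMeasure] (f : E → ℝ≥0∞) {r : ℝ} (hr : r ≠ 0) :
    ∫⁻ x, f (r • x) ∂μ = ENNReal.ofReal |(r ^ finrank ℝ E)⁻¹| * ∫⁻ x, f x ∂μ := by
  rw [← smul_eq_mul, ← lintegral_smul_measure, ← Measure.map_addHaar_smul μ hr]
  exact (lintegral_map_equiv f (MeasurableEquiv.smul₀ r hr)).symm

section

variable {n : ℕ}

theorem stdGauss_pos (x : EuclideanSpace ℝ (Fin n)) : 0 < stdGauss n x := by
  unfold stdGauss; positivity

def ouConst (n : ℕ) (p : ℝ) : ℝ :=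
  (2 * π) ^ ((n : ℝ) / (2 * p) - n / 2) * p ^ (-(n : ℝ) / 2)

theorem ouConst_pos (n : ℕ) {p : ℝ} (hp : 0 < p) : 0 < ouConst n p := by
  unfold ouConst; positivity

theorem heatKernel_div_stdGauss_rpow {p : ℝ} (hp : 0 < p) (v y : EuclideanSpace ℝ (Fin n)) :
    exp (-‖v - y‖ ^ 2 / (2 * p)) / (2 * π * p) ^ ((n : ℝ) / 2) / stdGauss n y ^ (1 / p) =
      ouConst n p * exp (-‖v‖ ^ 2 / (2 * p)) * exp (1 / p * inner ℝ v y) := by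
  have hπ : 0 < 2 * π := by positivity
  have hkernel : (2 * π * p) ^ ((n : ℝ) / 2) = exp ((log (2 * π) + log p) * (n / 2)) := by
    rw [rpow_def_of_pos (by positivity), log_mul hπ.ne' hp.ne']
  have hgauss : stdGauss n y ^ (1 / p) =
      exp ((log (2 * π) * (-(n : ℝ) / 2) + -‖y‖ ^ 2 / 2) * (1 / p)) := by
    rw [stdGauss, rpow_def_of_pos hπ, ← exp_add, ← exp_mul]
  have hconst : ouConst n p =
      exp (log (2 * π) * ((n : ℝ) / (2 * p) - n / 2) + log p * (-(n : ℝ) / 2)) := by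
    rw [ouConst, rpow_def_of_pos hπ, rpow_def_of_pos hp, ← exp_add]
  rw [norm_sub_sq_real, hkernel, hgauss, hconst, div_div, ← exp_add, ← exp_sub, ← exp_add,
    ← exp_add, exp_eq_exp]
  field_simp
  ring

theorem ouSemigroup_div_stdGauss_rpow {s : ℝ} (hs : 0 < s) (h : EuclideanSpace ℝ (Fin n) → ℝ)
    (x : EuclideanSpace ℝ (Fin n)) :
    ouSemigroup s (fun y => (ENNReal.ofReal (h y) / ENNReal.ofReal (stdGauss n y)) ^
        (1 / (1 - exp (-2 * s)))) x =
      ENNReal.ofReal (ouConst n (1 - exp (-2 * s)) *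
          exp (-‖exp (-s) • x‖ ^ 2 / (2 * (1 - exp (-2 * s))))) *
        expTransform (1 - exp (-2 * s)) h (exp (-s) • x) := by
  have hp : 0 < 1 - exp (-2 * s) := sub_pos.2 (exp_lt_one_iff.2 (by linarith))
  rw [ouSemigroup, expTransform, ← lintegral_const_mul' _ _ ENNReal.ofReal_ne_top]
  refine lintegral_congr fun y => ?_
  have hγ := stdGauss_pos y
  rw [← mul_assoc, ← ENNReal.ofReal_mul (mul_pos (ouConst_pos n hp) (exp_pos _)).le,
    ← heatKernel_div_stdGauss_rpow hp,
    ENNReal.ofReal_div_of_pos (rpow_pos_of_pos hγ _),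
    ENNReal.div_rpow_of_nonneg _ _ (one_div_pos.2 hp).le, ENNReal.ofReal_rpow_of_pos hγ]
  simp only [div_eq_mul_inv]
  ring

theorem rpow_gaussian_mul_stdGauss {c p q a : ℝ} (hc : 0 < c) (hp : p ≠ 0) (hqa : q * a ^ 2 = -p)
    (x : EuclideanSpace ℝ (Fin n)) :
    (c * exp (-‖a • x‖ ^ 2 / (2 * p))) ^ q * stdGauss n x = c ^ q * (2 * π) ^ (-(n : ℝ) / 2) := by
  have hcancel : -‖a • x‖ ^ 2 / (2 * p) * q + -‖x‖ ^ 2 / 2 = 0 := by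
    rw [norm_smul, mul_pow, norm_eq_abs, sq_abs]
    field_simp
    linear_combination (-‖x‖ ^ 2) * hqa
  rw [mul_rpow hc.le (exp_pos _).le, ← exp_mul, stdGauss]
  calc c ^ q * exp (-‖a • x‖ ^ 2 / (2 * p) * q) * ((2 * π) ^ (-(n : ℝ) / 2) * exp (-‖x‖ ^ 2 / 2))
      = c ^ q * (2 * π) ^ (-(n : ℝ) / 2) * exp (-‖a • x‖ ^ 2 / (2 * p) * q + -‖x‖ ^ 2 / 2) := by
        rw [exp_add]; ring
    _ = c ^ q * (2 * π) ^ (-(n : ℝ) / 2) := by rw [hcancel, exp_zero, mul_one]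

theorem endpoint_const_rpow_eq {p q : ℝ} (hp : 0 < p) (hpq : q * (1 - p) = -p) :
    (((2 * π) ^ ((1 / p + 1 / (q / (q - 1))) / 2 - 1) / √p) ^ n) ^ q =
      ouConst n p ^ q * (2 * π) ^ (-(n : ℝ) / 2) := by
  have hπ : 0 < 2 * π := by positivity
  have hq1 : q - 1 ≠ 0 := fun hq => by nlinarith
  have hconj : q / (q - 1) = p := by rw [div_eq_iff hq1]; linarith
  rw [hconj, show (1 / p + 1 / p) / 2 - 1 = 1 / p - 1 by ring, sqrt_eq_rpow,
    ← rpow_natCast, ← rpow_mul (by positivity), rpow_def_of_pos hπ (1 / p - 1),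
    rpow_def_of_pos hp (1 / 2), ← exp_sub, ← exp_mul, ouConst, mul_rpow (by positivity)
    (by positivity), rpow_def_of_pos hπ, rpow_def_of_pos hp, ← exp_mul, ← exp_mul,
    rpow_def_of_pos hπ, ← exp_add, ← exp_add, exp_eq_exp]
  field_simp
  linear_combination (n * log (2 * π)) * hpq

end

theorem endpoint_norm_identity_general (n : ℕ) (s p q : ℝ) (hs : 0 < s)
    (hp : p = 1 - Real.exp (-2 * s)) (hq : q = 1 - Real.exp (2 * s))
    (h : EuclideanSpace ℝ (Fin n) → ℝ) :
    gaussLqNormPow q (ouSemigroup s fun y =>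
        (ENNReal.ofReal (h y) / ENNReal.ofReal (stdGauss n y)) ^ (1 / p)) =
      ENNReal.ofReal
          ((((2 * Real.pi) ^ ((1 / p + 1 / (q / (q - 1))) / 2 - 1) /
              Real.sqrt (1 - Real.exp (-2 * s))) ^ n) ^ q *
            Real.exp (n * s)) *
        ∫⁻ x, expTransform p h x ^ q := by
  have hp0 : 0 < p := hp ▸ sub_pos.2 (exp_lt_one_iff.2 (by linarith))
  have hdecay : exp (-s) ^ 2 = 1 - p := by rw [hp, ← exp_nat_mul]; push_cast; ring_nf
  have hqa : q * exp (-s) ^ 2 = -p := by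
    have hinv : exp (2 * s) * exp (-2 * s) = 1 := by rw [← exp_add]; ring_nf; exact exp_zero
    rw [hdecay, hp, hq]
    linear_combination -hinv
  have hpointwise : ∀ x, (ouSemigroup s (fun y =>
      (ENNReal.ofReal (h y) / ENNReal.ofReal (stdGauss n y)) ^ (1 / p)) x) ^ q *
        ENNReal.ofReal (stdGauss n x) =
      ENNReal.ofReal (ouConst n p ^ q * (2 * π) ^ (-(n : ℝ) / 2)) *
        expTransform p h (exp (-s) • x) ^ q := by
    intro x
    rw [hp, ouSemigroup_div_stdGauss_rpow hs, ← hp,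
      ENNReal.ofReal_mul_rpow (mul_pos (ouConst_pos n hp0) (exp_pos _)), mul_right_comm,
      ← ENNReal.ofReal_mul (rpow_nonneg (mul_pos (ouConst_pos n hp0) (exp_pos _)).le _),
      rpow_gaussian_mul_stdGauss (ouConst_pos n hp0) hp0.ne' hqa]
  have hjacobian : |(exp (-s) ^ n)⁻¹| = exp (n * s) := by
    rw [← exp_nat_mul, ← exp_neg, abs_of_pos (exp_pos _)]; ring_nf
  rw [gaussLqNormPow, lintegral_congr hpointwise, lintegral_const_mul' _ _ ENNReal.ofReal_ne_top,
    Measure.lintegral_comp_smul volume (fun y => expTransform p h y ^ q) (exp_pos _).ne',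
    finrank_euclideanSpace_fin, hjacobian, ← mul_assoc,
    ← ENNReal.ofReal_mul (mul_pos (rpow_pos_of_pos (ouConst_pos n hp0) _) (by positivity)).le,
    ← hp,
    endpoint_const_rpow_eq hp0 (hdecay ▸ hqa)]

/-- Identity (2.1): at the endpoint `p = 1 - e^{-2s}`, `q = 1 - e^{2s}`,
`‖P_s[(h/γ)^{1/p}]‖_{L^q(γ)}^q = C_s^q e^{ns} ∫ F(x)^q dx`
with `C_s = ((2π)^{(1/p+1/q')/2 - 1}/√(1-e^{-2s}))^n`. -/
theorem endpoint_norm_identity (n : ℕ) (hn : 1 ≤ n) (s p q : ℝ) (hs : 0 < s)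
    (hp : p = 1 - Real.exp (-2 * s)) (hq : q = 1 - Real.exp (2 * s))
    (h : EuclideanSpace ℝ (Fin n) → ℝ)
    (hmeas : Measurable h) (hpos : ∀ z, 0 ≤ h z)
    (hF : ∀ x, 0 < expTransform p h x ∧ expTransform p h x < ⊤) :
    gaussLqNormPow q (ouSemigroup s fun y =>
        (ENNReal.ofReal (h y) / ENNReal.ofReal (stdGauss n y)) ^ (1 / p)) =
      ENNReal.ofReal
          ((((2 * Real.pi) ^ ((1 / p + 1 / (q / (q - 1))) / 2 - 1) /
              Real.sqrt (1 - Real.exp (-2 * s))) ^ n) ^ q *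
            Real.exp (n * s)) *
        ∫⁻ x, expTransform p h x ^ q :=
  endpoint_norm_identity_general n s p q hs hp hq h
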